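/- arXiv:math/0504195 — 2 statements merged into one kernel-verified Lean document; each statement's English description precedes it below -/
import Mathlib

section
/- For all integers n ≥ 0 and k ≥ 0, x^n + y^n = ∑_{j=0}^{⌊n/2⌋} (-1)^j (n/(n-j)) C(n-j, j) (xy)^j (x+y)^{n-2j} for commuting indeterminates x, y (with the convention that the j = n-j = 0 term is interpreted appropriately for n = 0). -/
/-!
Both `x ^ n + y ^ n` and the Dickson polynomial of the first kind `D_n = dickson 1 (x * y) n`,
evaluated at `x + y`, satisfy `u (n + 2) = (x + y) * u (n + 1) - x * y * u n`, so they agree.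
The Dickson polynomials `E_n = dickson 2 a n` of the second kind have the coefficients
`(-1) ^ j * C(n - j, j)` by Pascal's rule, and `D_n = 2 * E_n - X * E_(n - 1)` for `n ≥ 1`.
This gives `D_n` the coefficients `(-1) ^ j * (2 * C(n - j, j) - C(n - 1 - j, j))`, which is
`(-1) ^ j * n / (n - j) * C(n - j, j)`.
-/

open Finset

theorem Nat.cast_div_mul_choose_eq_two_mul_choose_sub {n : ℕ} (hn : n ≠ 0) (j : ℕ) :
    (n : ℚ) / (n - j) * (n - j).choose j = 2 * (n - j).choose j - (n - 1 - j).choose j := by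
  rcases lt_or_ge (n - j) j with hlt | hle
  · rw [Nat.choose_eq_zero_of_lt hlt, Nat.choose_eq_zero_of_lt (by omega)]
    simp
  obtain ⟨k, hk⟩ : ∃ k, n - j = k + 1 := ⟨n - j - 1, by omega⟩
  have hchoose := Nat.choose_mul_succ_eq k j
  qify [show j ≤ k + 1 by omega] at hchoose
  have hn' : (n : ℚ) = k + 1 + j := by exact_mod_cast (by omega : n = k + 1 + j)
  rw [show n - 1 - j = k by omega, hk, hn', add_sub_cancel_right, div_mul_eq_mul_div,
    div_eq_iff (by positivity)]
  linear_combination hchoose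

namespace Polynomial

variable {R : Type*} [CommRing R]

theorem dickson_one_mul_eval_add (x y : R) :
    ∀ n, (dickson 1 (x * y) n).eval (x + y) = x ^ n + y ^ n
  | 0 => by norm_num
  | 1 => by simp
  | n + 2 => by
    simp only [dickson_add_two, eval_sub, eval_mul, eval_X, eval_C, dickson_one_mul_eval_add x y]
    ring

theorem dickson_one_succ (a : R) :
    ∀ n, dickson 1 a (n + 1) = 2 * dickson 2 a (n + 1) - X * dickson 2 a n
  | 0 => by norm_num; ring
  | 1 => by simp only [dickson_add_two, dickson_one, dickson_zero]; norm_num; ring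
  | n + 2 => by
    rw [dickson_add_two, dickson_one_succ a (n + 1), dickson_one_succ a n,
      dickson_add_two 2 a (n + 1), dickson_add_two 2 a n]
    ring

section DicksonTerm

variable (a s : R)

def dicksonTerm (n j : ℕ) : R :=
  (-1) ^ j * ((n - j).choose j : R) * (a ^ j * s ^ (n - 2 * j))

theorem dicksonTerm_eq_zero_of_lt {n j : ℕ} (h : n < 2 * j) : dicksonTerm a s n j = 0 := by
  simp [dicksonTerm, Nat.choose_eq_zero_of_lt (by omega : n - j < j)]

theorem dicksonTerm_add_two_zero (n : ℕ) :
    dicksonTerm a s (n + 2) 0 = s * dicksonTerm a s (n + 1) 0 := by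
  simp [dicksonTerm, pow_succ']

theorem dicksonTerm_add_two_succ {n j : ℕ} (hj : j ≤ n) :
    dicksonTerm a s (n + 2) (j + 1) =
      s * dicksonTerm a s (n + 1) (j + 1) - a * dicksonTerm a s n j := by
  have hpascal :
      (n + 2 - (j + 1)).choose (j + 1) = (n - j).choose j + (n - j).choose (j + 1) := by
    rw [show n + 2 - (j + 1) = n - j + 1 by omega, Nat.choose_succ_succ']
  simp only [dicksonTerm, hpascal, show n + 1 - (j + 1) = n - j by omega,
    show n + 2 - 2 * (j + 1) = n - 2 * j by omega,
    show n + 1 - 2 * (j + 1) = n - 2 * j - 1 by omega]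
  rcases lt_or_ge (n - j) (j + 1) with hlt | hle
  · rw [Nat.choose_eq_zero_of_lt hlt]
    push_cast
    ring
  · obtain ⟨e, he⟩ : ∃ e, n - 2 * j = e + 1 := ⟨n - 2 * j - 1, by omega⟩
    rw [he, Nat.add_sub_cancel, pow_succ]
    push_cast
    ring

theorem two_mul_dicksonTerm_succ_sub (m j : ℕ) :
    2 * dicksonTerm a s (m + 1) j - s * dicksonTerm a s m j =
      (-1) ^ j * (2 * (m + 1 - j).choose j - (m - j).choose j : R) *
        (a ^ j * s ^ (m + 1 - 2 * j)) := by
  unfold dicksonTerm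
  rcases lt_or_ge (m - j) j with hlt | hle
  · rw [Nat.choose_eq_zero_of_lt hlt]
    push_cast
    ring
  · rw [show m + 1 - 2 * j = m - 2 * j + 1 by omega, pow_succ]
    ring

theorem dickson_two_eval_eq_sum :
    ∀ n, (dickson 2 a n).eval s = ∑ j ∈ range (n + 1), dicksonTerm a s n j
  | 0 => by norm_num [dicksonTerm]
  | 1 => by simp [sum_range_succ, dicksonTerm]
  | n + 2 => by
    have hsplit : ∀ m, ∑ j ∈ range (m + 2), dicksonTerm a s (m + 1) j =
        dicksonTerm a s (m + 1) 0 + ∑ j ∈ range (m + 1), dicksonTerm a s (m + 1) (j + 1) := by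
      intro m
      rw [sum_range_succ', add_comm]
    simp only [dickson_add_two, eval_sub, eval_mul, eval_X, eval_C, dickson_two_eval_eq_sum]
    rw [hsplit, hsplit, sum_range_succ _ (n + 1),
      dicksonTerm_eq_zero_of_lt a s (n := n + 2) (j := n + 2) (by omega), add_zero, mul_add,
      mul_sum, mul_sum, dicksonTerm_add_two_zero, add_sub_assoc, ← sum_sub_distrib]
    congr 1
    exact sum_congr rfl fun j hj =>
      (dicksonTerm_add_two_succ a s (Nat.lt_succ_iff.mp (mem_range.mp hj))).symm

theorem dickson_one_eval_eq_sum [Algebra ℚ R] {n : ℕ} (hn : n ≠ 0) :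
    (dickson 1 a n).eval s = ∑ j ∈ range (n + 1),
      algebraMap ℚ R ((-1) ^ j * ((n : ℚ) / ((n : ℚ) - (j : ℚ)) * ((n - j).choose j)))
        * (a ^ j * s ^ (n - 2 * j)) := by
  obtain ⟨m, rfl⟩ : ∃ m, n = m + 1 := ⟨n - 1, by omega⟩
  have hextend : ∑ j ∈ range (m + 1), dicksonTerm a s m j =
      ∑ j ∈ range (m + 2), dicksonTerm a s m j := by
    rw [sum_range_succ _ (m + 1), dicksonTerm_eq_zero_of_lt a s (by omega), add_zero]
  rw [dickson_one_succ, eval_sub, eval_mul, eval_mul, eval_X, eval_ofNat, dickson_two_eval_eq_sum,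
    dickson_two_eval_eq_sum, hextend, mul_sum, mul_sum, ← sum_sub_distrib]
  refine sum_congr rfl fun j _ => ?_
  rw [two_mul_dicksonTerm_succ_sub, Nat.cast_div_mul_choose_eq_two_mul_choose_sub hn]
  simp [map_ofNat]

end DicksonTerm

end Polynomial

/-- `x^n + y^n = ∑_{j=0}^{⌊n/2⌋} (-1)^j (n/(n-j)) C(n-j,j) (xy)^j (x+y)^{n-2j}`,
with the `n = 0` term interpreted as `2`. -/
theorem pow_add_pow_eq_sum (R : Type*) [CommRing R] [Algebra ℚ R]
    (x y : R) (n : ℕ) :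
    x ^ n + y ^ n
      = ∑ j ∈ Finset.range (n / 2 + 1),
          algebraMap ℚ R ((-1) ^ j *
            (if n = 0 then 2 else (n : ℚ) / ((n : ℚ) - (j : ℚ)) * ((n - j).choose j)))
            * ((x * y) ^ j * (x + y) ^ (n - 2 * j)) := by
  rcases eq_or_ne n 0 with rfl | hn
  · norm_num [map_ofNat]
  simp only [← Polynomial.dickson_one_mul_eval_add, Polynomial.dickson_one_eval_eq_sum _ _ hn,
    if_neg hn]
  refine (sum_subset (range_subset_range.2 (by omega)) fun j _ hj => ?_).symm
  rw [mem_range, not_lt] at hj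
  rw [Nat.choose_eq_zero_of_lt (by omega : n - j < j)]
  simp
end

section
/- For n ≥ 7 and 1 ≤ k ≤ (n-1)/2, assuming the sequences (I_{n-1,j})_j and (I_{n-2,j})_j are unimodal (increasing up to their middle, symmetric), the inequality C_0 I_{n-2,k} + C_1 I_{n-2,k-1} + C_2 I_{n-2,k-2} + C_3 I_{n-2,k-3} ≥ 0 holds, where C_0 = (k+1)² + n - 2, C_1 = 2nk - 3k² - 2k - 2n + 5, C_2 = n² - 4nk + 3k² + 4n - 2k - 5, C_3 = -(n-k+1)² - n + 2. -/
open Finset Polynomial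

/-- Number of descents of a permutation of `Fin n`. -/
def desNum {n : ℕ} (π : Equiv.Perm (Fin n)) : ℕ :=
  (Finset.univ.filter fun i : Fin n =>
    ∃ j : Fin n, (j : ℕ) = (i : ℕ) + 1 ∧ π j < π i).card

/-- `invCount n k` is the number of involutions of `{1,…,n}` with exactly `k` descents. -/
def invCount (n k : ℕ) : ℕ :=
  (Finset.univ.filter fun π : Equiv.Perm (Fin n) => π * π = 1 ∧ desNum π = k).card

/-- `fpfInvCount n k` is the number of fixed-point-free involutions of `{1,…,n}`
with exactly `k` descents. -/
def fpfInvCount (n k : ℕ) : ℕ :=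
  (Finset.univ.filter fun π : Equiv.Perm (Fin n) =>
    π * π = 1 ∧ (∀ i, π i ≠ i) ∧ desNum π = k).card

/-- `I_{n,k}` extended by zero to negative indices `k`. -/
def Iz (n : ℕ) (k : ℤ) : ℤ := if 0 ≤ k then invCount n k.toNat else 0

lemma Iz_natCast (m k : ℕ) : Iz m (k : ℤ) = invCount m k := by
  simp [Iz]

set_option maxHeartbeats 1000000 in
/-- The key inequality in the inductive proof of the unimodality of `I_{n,k}`:
assuming the sequences `(I_{n-1,j})_j` and `(I_{n-2,j})_j` are unimodal
(increasing up to the middle and symmetric), the combination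
`C₀ I_{n-2,k} + C₁ I_{n-2,k-1} + C₂ I_{n-2,k-2} + C₃ I_{n-2,k-3}` is nonnegative. -/
theorem C_combination_nonneg (n : ℕ) (hn : 7 ≤ n) (k : ℕ) (hk1 : 1 ≤ k)
    (hk2 : 2 * k ≤ n - 1)
    (hincr1 : ∀ j, j + 1 ≤ (n - 1 - 1) / 2 → invCount (n - 1) j ≤ invCount (n - 1) (j + 1))
    (hsym1 : ∀ j, j ≤ n - 1 - 1 → invCount (n - 1) j = invCount (n - 1) (n - 1 - 1 - j))
    (hincr2 : ∀ j, j + 1 ≤ (n - 2 - 1) / 2 → invCount (n - 2) j ≤ invCount (n - 2) (j + 1))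
    (hsym2 : ∀ j, j ≤ n - 2 - 1 → invCount (n - 2) j = invCount (n - 2) (n - 2 - 1 - j)) :
    0 ≤ (((k : ℤ) + 1) ^ 2 + n - 2) * Iz (n - 2) k
        + (2 * (n : ℤ) * k - 3 * (k : ℤ) ^ 2 - 2 * k - 2 * n + 5) * Iz (n - 2) ((k : ℤ) - 1)
        + ((n : ℤ) ^ 2 - 4 * n * k + 3 * (k : ℤ) ^ 2 + 4 * n - 2 * k - 5)
            * Iz (n - 2) ((k : ℤ) - 2)
        + (-(((n : ℤ) - k + 1) ^ 2) - n + 2) * Iz (n - 2) ((k : ℤ) - 3) := by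
  have hn7 : (7:ℤ) ≤ (n:ℤ) := by exact_mod_cast hn
  have hk1' : (1:ℤ) ≤ (k:ℤ) := by exact_mod_cast hk1
  have hkn : 2*(k:ℤ) ≤ (n:ℤ) - 1 := by omega
  rcases Nat.lt_or_ge k 3 with hk3 | hk3
  · -- k = 1 or k = 2
    interval_cases k
    · norm_num [Iz]
      have a1 : (0:ℤ) ≤ (invCount (n-2) 1 : ℤ) := Int.natCast_nonneg _
      have a0 : (0:ℤ) ≤ (invCount (n-2) 0 : ℤ) := Int.natCast_nonneg _
      nlinarith
    · norm_num [Iz]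
      have a2 : (0:ℤ) ≤ (invCount (n-2) 2 : ℤ) := Int.natCast_nonneg _
      have a1 : (0:ℤ) ≤ (invCount (n-2) 1 : ℤ) := Int.natCast_nonneg _
      have a0 : (0:ℤ) ≤ (invCount (n-2) 0 : ℤ) := Int.natCast_nonneg _
      nlinarith [mul_nonneg (show (0:ℤ) ≤ (n:ℤ)+7 by linarith) a2,
        mul_nonneg (show (0:ℤ) ≤ 2*(n:ℤ)-11 by linarith) a1,
        mul_nonneg (mul_nonneg (show (0:ℤ) ≤ (n:ℤ)-1 by linarith)
          (show (0:ℤ) ≤ (n:ℤ)-3 by linarith)) a0]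
  · -- k ≥ 3
    have hk3' : (3:ℤ) ≤ (k:ℤ) := by exact_mod_cast hk3
    have e0 : Iz (n-2) (k:ℤ) = invCount (n-2) k := Iz_natCast _ _
    have e1 : Iz (n-2) ((k:ℤ)-1) = invCount (n-2) (k-1) := by
      rw [show ((k:ℤ)-1) = ((k-1:ℕ):ℤ) by omega, Iz_natCast]
    have e2 : Iz (n-2) ((k:ℤ)-2) = invCount (n-2) (k-2) := by
      rw [show ((k:ℤ)-2) = ((k-2:ℕ):ℤ) by omega, Iz_natCast]
    have e3 : Iz (n-2) ((k:ℤ)-3) = invCount (n-2) (k-3) := by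
      rw [show ((k:ℤ)-3) = ((k-3:ℕ):ℤ) by omega, Iz_natCast]
    rw [e0, e1, e2, e3]
    have hd2 : (invCount (n-2) (k-2) : ℤ) ≤ (invCount (n-2) (k-1) : ℤ) := by
      have h := hincr2 (k-2) (by omega)
      rw [show k-2+1 = k-1 by omega] at h
      exact_mod_cast h
    have hd3 : (invCount (n-2) (k-3) : ℤ) ≤ (invCount (n-2) (k-2) : ℤ) := by
      have h := hincr2 (k-3) (by omega)
      rw [show k-3+1 = k-2 by omega] at h
      exact_mod_cast h
    have hS2 : (0:ℤ) ≤ -2*(k:ℤ)^2 + 2*n*k - n + 4 := by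
      nlinarith [mul_nonneg (show (0:ℤ) ≤ 2*(k:ℤ)-1 by linarith)
        (show (0:ℤ) ≤ (n:ℤ)-2*k-1 by linarith)]
    have hS3 : (0:ℤ) ≤ ((n:ℤ)-k)^2 + 3*n - 2*k - 1 := by nlinarith
    have hcase : 2*k ≤ n-3 ∨ 2*k = n-2 ∨ 2*k = n-1 := by omega
    rcases hcase with hc | hc | hc
    · -- strictly below the middle: all three differences nonneg
      have hd1 : (invCount (n-2) (k-1) : ℤ) ≤ (invCount (n-2) k : ℤ) := by
        have h := hincr2 (k-1) (by omega)
        rw [show k-1+1 = k by omega] at h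
        exact_mod_cast h
      have hS1 : (0:ℤ) ≤ (k:ℤ)^2 + 2*k + n - 1 := by nlinarith
      linarith [mul_nonneg hS1 (sub_nonneg.mpr hd1),
        mul_nonneg hS2 (sub_nonneg.mpr hd2),
        mul_nonneg hS3 (sub_nonneg.mpr hd3)]
    · -- 2k = n-2 : a_k = a_{k-1} by symmetry
      have hsymk : invCount (n-2) k = invCount (n-2) (k-1) := by
        have h := hsym2 k (by omega)
        rwa [show n-2-1-k = k-1 by omega] at h
      rw [hsymk]
      linarith [mul_nonneg hS2 (sub_nonneg.mpr hd2),
        mul_nonneg hS3 (sub_nonneg.mpr hd3)]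
    · -- 2k = n-1 : a_k = a_{k-2} by symmetry
      have hsymk : invCount (n-2) k = invCount (n-2) (k-2) := by
        have h := hsym2 k (by omega)
        rwa [show n-2-1-k = k-2 by omega] at h
      rw [hsymk]
      have h0 : (n:ℤ) - 2*k - 1 = 0 := by omega
      have hS21 : (0:ℤ) ≤ 2*(n:ℤ)*k - 3*(k:ℤ)^2 - 2*k - 2*n + 5 := by
        have hid : 2*(n:ℤ)*k - 3*(k:ℤ)^2 - 2*k - 2*n + 5
            = ((k:ℤ)-1)*((k:ℤ)-3) + (2*(k:ℤ)-2)*((n:ℤ)-2*k-1) := by ring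
        rw [hid, h0, mul_zero, add_zero]
        have := mul_nonneg (show (0:ℤ) ≤ (k:ℤ)-1 by linarith) (show (0:ℤ) ≤ (k:ℤ)-3 by linarith)
        linarith
      linarith [mul_nonneg hS21 (sub_nonneg.mpr hd2),
        mul_nonneg hS3 (sub_nonneg.mpr hd3)]
end
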